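/- arXiv:1401.1613 — 4 statements merged into one kernel-verified Lean document; each statement's English description precedes it below -/
import Mathlib

section
/- Let σ = a_1 a_2 … a_k be a finite word in some alphabet, and suppose p is the smallest period of σ (meaning a_i = a_{i+p} for all 1 ≤ i ≤ k−p). If σ has another period p' with p + p' ≤ k, then p divides p'. -/
/-- A word `a 1, …, a k` has period `p > 0` if `a i = a (i + p)` for all `1 ≤ i ≤ k - p`. -/
def HasPeriod {S : Type*} (a : ℕ → S) (k p : ℕ) : Prop :=
  0 < p ∧ ∀ i, 1 ≤ i → i + p ≤ k → a i = a (i + p)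

lemma hasPeriod_sub {S : Type*} (a : ℕ → S) (k p p' : ℕ) (hp : HasPeriod a k p)
    (hp' : HasPeriod a k p') (hlt : p < p') (hsum : p + p' ≤ k) :
    HasPeriod a k (p' - p) := by
  obtain ⟨hp0, hpa⟩ := hp
  obtain ⟨hp'0, hpa'⟩ := hp'
  refine ⟨by omega, fun i hi hik => ?_⟩
  by_cases h : i + p' ≤ k
  · calc a i = a (i + p') := hpa' i hi h
    _ = a (i + (p' - p) + p) := by congr 1; omega
    _ = a (i + (p' - p)) := (hpa (i + (p' - p)) (by omega) (by omega)).symm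
  · have hip : p < i := by omega
    calc a i = a (i - p + p) := by congr 1; omega
    _ = a (i - p) := (hpa (i - p) (by omega) (by omega)).symm
    _ = a (i - p + p') := hpa' (i - p) (by omega) (by omega)
    _ = a (i + (p' - p)) := by congr 1; omega

/-- If `p` is the smallest period of the word `a 1 … a k`, `p'` is another period,
and `p + p' ≤ k`, then `p` divides `p'`. -/
theorem smallest_period_divides {S : Type*} (a : ℕ → S) (k p p' : ℕ)
    (hp : HasPeriod a k p)
    (hmin : ∀ q, HasPeriod a k q → p ≤ q)
    (hp' : HasPeriod a k p')
    (hsum : p + p' ≤ k) : p ∣ p' := by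
  induction p' using Nat.strong_induction_on with
  | _ p' ih =>
    have hp0 : 0 < p := hp.1
    have hle : p ≤ p' := hmin p' hp'
    rcases eq_or_lt_of_le hle with h | h
    · exact h ▸ dvd_refl p
    · have hq : HasPeriod a k (p' - p) :=
        hasPeriod_sub a k p p' hp hp' h hsum
      have hdvd : p ∣ p' - p := ih (p' - p) (by omega) hq (by omega)
      have : p' = (p' - p) + p := by omega
      rw [this]
      exact dvd_add hdvd (dvd_refl p)
end

section
/- If a real number x has a continued fraction expansion [0; a₁, a₂, …] whose sequence of partial quotients (a_n) is eventually periodic but not eventually constant-free in the sense of being a genuine infinite expansion, then x is a quadratic irrational; conversely, an irrational x ∈ (0,1) whose continued fraction expansion is not eventually periodic is not a quadratic irrational. -/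
/-- Value of the finite continued fraction `[a₀; a₁, …, a_k]` given as a list. -/
noncomputable def cfValR : List ℕ → ℝ
  | [] => 0
  | [a] => a
  | a :: b :: l => a + 1 / cfValR (b :: l)

/-- The `n`-th convergent `[0; a 0, a 1, …, a (n-1)]` of the infinite continued
fraction with partial quotients `a`. -/
noncomputable def cfConv (a : ℕ → ℕ) (n : ℕ) : ℝ :=
  cfValR (0 :: List.ofFn fun i : Fin n => a i)

/-- `x` has infinite continued fraction expansion `[0; a 0, a 1, …]`. -/
def HasCF (x : ℝ) (a : ℕ → ℕ) : Prop :=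
  Filter.Tendsto (cfConv a) Filter.atTop (nhds x)

/-- A quadratic irrational: an irrational real root of a quadratic with integer
coefficients. -/
def QuadIrrational (x : ℝ) : Prop :=
  Irrational x ∧ ∃ A B C : ℤ, A ≠ 0 ∧ (A : ℝ) * x ^ 2 + B * x + C = 0

open Filter Topology Set

/-!
Write `y n = [0; a n, a (n + 1), …]`, so that `y (n + 1) = (y n)⁻¹ - a n`. A positive solution
of this recursion is determined by `a`, because two steps of it contract distances by a factor
at most `1 / 4`.

If `a` is periodic from `c` on with period `p`, uniqueness gives `y (c + p) = y c`. As `y c` is a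
Möbius transformation of `y (c + p)` with integer coefficients, `y c` is a quadratic irrational,
and so is `x = y 0`, obtained from `y c` by the maps `t ↦ (a n + t)⁻¹`.

Conversely, if `x` is a root of `A t² + B t + C`, substituting `t ↦ (a n + t)⁻¹` repeatedly gives
integer quadratics `F n` with root `y n` and the same discriminant `D`. Their other roots `z n`
obey the same recursion, so they cannot all be positive (by uniqueness, as `z 0 ≠ y 0`), and once
one is negative all later ones are `< -1`. Then `A_n² (y n - z n)² = D` with `y n - z n > 1`
bounds the coefficients of `F n`, so two of them coincide, which forces `y m = y m'` for some
`m < m'` and hence periodicity.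
-/

lemma cfValR_cons_eq_add (a : ℕ) (l : List ℕ) : cfValR (a :: l) = a + cfValR (0 :: l) := by
  cases l <;> simp [cfValR]

lemma cfConv_zero (b : ℕ → ℕ) : cfConv b 0 = 0 := by
  simp [cfConv, cfValR]

lemma cfConv_succ (b : ℕ → ℕ) (m : ℕ) :
    cfConv b (m + 1) = ((b 0 : ℝ) + cfConv (fun k => b (k + 1)) m)⁻¹ := by
  rw [cfConv, List.ofFn_succ, cfValR, cfValR_cons_eq_add]
  simp [cfConv]

lemma cfConv_mem_Icc {b : ℕ → ℕ} (hb : ∀ n, 1 ≤ b n) (m : ℕ) : cfConv b m ∈ Icc 0 1 := by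
  induction m generalizing b with
  | zero => simp [cfConv_zero]
  | succ m ih =>
    have hb0 : (1 : ℝ) ≤ b 0 := by exact_mod_cast hb 0
    have hpos : 0 ≤ cfConv (fun k => b (k + 1)) m := (ih fun n => hb (n + 1)).1
    rw [cfConv_succ]
    exact ⟨by positivity, inv_le_one_of_one_le₀ (by linarith)⟩

namespace HasCF

variable {w : ℝ} {b : ℕ → ℕ}

lemma mem_Ioo (hw : Irrational w) (hb : ∀ n, 1 ≤ b n) (h : HasCF w b) : w ∈ Ioo 0 1 := by
  have hb0 : (1 : ℝ) ≤ b 0 := by exact_mod_cast hb 0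
  have hconv : Tendsto (fun m => cfConv b (m + 1)) atTop (𝓝 w) :=
    h.comp (tendsto_add_atTop_nat 1)
  have hlow : ∀ m, ((b 0 : ℝ) + 1)⁻¹ ≤ cfConv b (m + 1) := fun m => by
    rw [cfConv_succ]
    have := cfConv_mem_Icc (fun n => hb (n + 1)) m
    gcongr
    · linarith [this.1]
    · exact this.2
  have hw0 : 0 < w :=
    (inv_pos.2 (by positivity)).trans_le (ge_of_tendsto' hconv hlow)
  have hw1 : w ≤ 1 := le_of_tendsto' h fun m => (cfConv_mem_Icc hb m).2
  exact ⟨hw0, hw1.lt_of_ne fun h1 => hw.ne_one h1⟩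

lemma tail (hw : Irrational w) (hb : ∀ n, 1 ≤ b n) (h : HasCF w b) :
    HasCF (w⁻¹ - b 0) fun k => b (k + 1) := by
  have hw0 : w ≠ 0 := (h.mem_Ioo hw hb).1.ne'
  have hconv : Tendsto (fun m => (cfConv b (m + 1))⁻¹ - b 0) atTop (𝓝 (w⁻¹ - b 0)) :=
    ((h.comp (tendsto_add_atTop_nat 1)).inv₀ hw0).sub_const _
  refine hconv.congr fun m => ?_
  rw [cfConv_succ, inv_inv, add_sub_cancel_left]

end HasCF

noncomputable def cfTails (x : ℝ) (a : ℕ → ℕ) : ℕ → ℝ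
  | 0 => x
  | n + 1 => (cfTails x a n)⁻¹ - a n

lemma irrational_cfTails_and_hasCF {x : ℝ} {a : ℕ → ℕ} (hx : Irrational x) (ha : ∀ n, 1 ≤ a n)
    (hcf : HasCF x a) (n : ℕ) :
    Irrational (cfTails x a n) ∧ HasCF (cfTails x a n) fun k => a (n + k) := by
  induction n with
  | zero => simpa [cfTails] using ⟨hx, hcf⟩
  | succ n ih =>
    obtain ⟨hirr, hcfn⟩ := ih
    refine ⟨hirr.inv.sub_natCast _, ?_⟩
    simpa [cfTails, Nat.add_right_comm n 1, Nat.add_assoc] using hcfn.tail hirr fun k => ha (n + k)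

/-- `y n = [0; a n, a (n + 1), …]`: the reciprocals of the complete quotients. -/
def IsCFTails (a : ℕ → ℕ) (y : ℕ → ℝ) : Prop :=
  ∀ n, y n ∈ Ioo 0 1 ∧ y (n + 1) = (y n)⁻¹ - a n

namespace IsCFTails

variable {a : ℕ → ℕ} {y u v : ℕ → ℝ}

lemma of_pos (ha : ∀ n, 1 ≤ a n) (hpos : ∀ n, 0 < y n)
    (hrec : ∀ n, y (n + 1) = (y n)⁻¹ - a n) : IsCFTails a y := by
  refine fun n => ⟨⟨hpos n, ?_⟩, hrec n⟩
  have : (1 : ℝ) ≤ a n := by exact_mod_cast ha n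
  have hinv : (y n)⁻¹ = a n + y (n + 1) := by rw [hrec]; ring
  rw [← inv_inv (y n), hinv]
  exact inv_lt_one_of_one_lt₀ (by linarith [hpos (n + 1)])

lemma pos (h : IsCFTails a y) (n : ℕ) : 0 < y n := (h n).1.1

lemma lt_one (h : IsCFTails a y) (n : ℕ) : y n < 1 := (h n).1.2

lemma succ (h : IsCFTails a y) (n : ℕ) : y (n + 1) = (y n)⁻¹ - a n := (h n).2

lemma inv_eq (h : IsCFTails a y) (n : ℕ) : (y n)⁻¹ = a n + y (n + 1) := by
  rw [h.succ, add_sub_cancel]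

lemma eq_inv (h : IsCFTails a y) (n : ℕ) : y n = (a n + y (n + 1))⁻¹ := by
  rw [← h.inv_eq, inv_inv]

lemma one_le (h : IsCFTails a y) (n : ℕ) : 1 ≤ a n := by
  have : (0 : ℝ) < a n := by
    linarith [h.inv_eq n, (one_lt_inv₀ (h.pos n)).2 (h.lt_one n), h.lt_one (n + 1)]
  exact Nat.cast_pos.1 this

lemma floor_inv (h : IsCFTails a y) (n : ℕ) : ⌊(y n)⁻¹⌋₊ = a n := by
  rw [Nat.floor_eq_iff (inv_pos.2 (h.pos n)).le, h.inv_eq]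
  exact ⟨by linarith [h.pos (n + 1)], by linarith [h.lt_one (n + 1)]⟩

lemma mul_succ_le (h : IsCFTails a y) (n : ℕ) : y n * y (n + 1) ≤ 1 / 2 := by
  have : (1 : ℝ) ≤ a n := by exact_mod_cast h.one_le n
  have h0 := h.pos (n + 1)
  have h1 := h.lt_one (n + 1)
  rw [h.eq_inv n, inv_mul_eq_div, div_le_iff₀ (by linarith)]
  linarith

lemma sub_eq (hu : IsCFTails a u) (hv : IsCFTails a v) (n : ℕ) :
    u n - v n = u n * v n * (v (n + 1) - u (n + 1)) := by
  rw [hu.succ, hv.succ]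
  field_simp [(hu.pos n).ne', (hv.pos n).ne']
  ring

lemma abs_sub_le (hu : IsCFTails a u) (hv : IsCFTails a v) (n : ℕ) :
    |u n - v n| ≤ 1 / 4 * |u (n + 2) - v (n + 2)| := by
  have hprod : u n * u (n + 1) * (v n * v (n + 1)) ≤ 1 / 2 * (1 / 2) :=
    mul_le_mul (hu.mul_succ_le n) (hv.mul_succ_le n)
      (mul_pos (hv.pos n) (hv.pos _)).le (by norm_num)
  calc |u n - v n| = u n * u (n + 1) * (v n * v (n + 1)) * |u (n + 2) - v (n + 2)| := by
        rw [hu.sub_eq hv, abs_mul, abs_of_pos (mul_pos (hu.pos n) (hv.pos n)), abs_sub_comm,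
          hu.sub_eq hv (n + 1), abs_mul, abs_of_pos (mul_pos (hu.pos _) (hv.pos _)),
          abs_sub_comm (v _)]
        ring
    _ ≤ 1 / 4 * |u (n + 2) - v (n + 2)| := by gcongr; linarith

lemma abs_sub_le_pow (hu : IsCFTails a u) (hv : IsCFTails a v) (k n : ℕ) :
    |u n - v n| ≤ (1 / 4) ^ k := by
  induction k generalizing n with
  | zero =>
    rw [pow_zero, abs_sub_le_iff]
    constructor <;> linarith [hu.lt_one n, hv.lt_one n, hu.pos n, hv.pos n]
  | succ k ih =>
    calc |u n - v n| ≤ 1 / 4 * |u (n + 2) - v (n + 2)| := hu.abs_sub_le hv n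
      _ ≤ 1 / 4 * (1 / 4) ^ k := by gcongr; exact ih _
      _ = (1 / 4) ^ (k + 1) := by ring

theorem unique (hu : IsCFTails a u) (hv : IsCFTails a v) : u = v := by
  funext n
  have hlim : Tendsto (fun k : ℕ => ((1 : ℝ) / 4) ^ k) atTop (𝓝 0) :=
    tendsto_pow_atTop_nhds_zero_of_lt_one (by norm_num) (by norm_num)
  exact sub_eq_zero.1 (abs_nonpos_iff.1 (ge_of_tendsto' hlim (hu.abs_sub_le_pow hv · n)))

end IsCFTails

lemma isCFTails_cfTails {x : ℝ} {a : ℕ → ℕ} (hx : Irrational x) (ha : ∀ n, 1 ≤ a n)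
    (hcf : HasCF x a) : IsCFTails a (cfTails x a) := fun n =>
  have ⟨hirr, hcfn⟩ := irrational_cfTails_and_hasCF hx ha hcf n
  ⟨hcfn.mem_Ioo hirr fun k => ha (n + k), rfl⟩

lemma const_ne_zero_of_irrational_root {x : ℝ} (hx : Irrational x) {A B C : ℤ} (hA : A ≠ 0)
    (h : (A : ℝ) * x ^ 2 + B * x + C = 0) : C ≠ 0 := by
  rintro rfl
  have hlin : (A : ℝ) * x + B = 0 := by
    refine (mul_eq_zero.1 (?_ : x * (A * x + B) = 0)).resolve_left hx.ne_zero
    linear_combination h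
  refine hx ⟨-B / A, ?_⟩
  push_cast
  rw [div_eq_iff (by exact_mod_cast hA)]
  linarith

namespace QuadIrrational

variable {x : ℝ}

lemma natCast_add (h : QuadIrrational x) (k : ℕ) : QuadIrrational (k + x) := by
  obtain ⟨hx, A, B, C, hA, hroot⟩ := h
  refine ⟨hx.natCast_add k, A, B - 2 * A * k, C - B * k + A * k ^ 2, hA, ?_⟩
  push_cast
  linear_combination hroot

lemma inv (h : QuadIrrational x) : QuadIrrational x⁻¹ := by
  obtain ⟨hx, A, B, C, hA, hroot⟩ := h
  refine ⟨hx.inv, C, B, A, const_ne_zero_of_irrational_root hx hA hroot, ?_⟩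
  field_simp [hx.ne_zero]
  linear_combination hroot

end QuadIrrational

namespace IsCFTails

variable {a : ℕ → ℕ} {y : ℕ → ℝ}

lemma shift (h : IsCFTails a y) (c : ℕ) : IsCFTails (fun k => a (c + k)) fun k => y (c + k) :=
  fun k => h (c + k)

lemma irrational (h : IsCFTails a y) (h0 : Irrational (y 0)) (n : ℕ) : Irrational (y n) := by
  induction n with
  | zero => exact h0
  | succ n ih => exact h.succ n ▸ ih.inv.sub_natCast _

lemma eq_of_periodic {c p : ℕ} (h : IsCFTails a y) (hper : ∀ n, c ≤ n → a (n + p) = a n) :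
    y (c + p) = y c := by
  have hshift : (fun k => a (c + p + k)) = fun k => a (c + k) := funext fun k => by
    rw [Nat.add_right_comm]
    exact hper _ (Nat.le_add_right c k)
  have h' := h.shift (c + p)
  rw [hshift] at h'
  simpa using congrFun (h'.unique (h.shift c)) 0

lemma periodic_of_eq {m p : ℕ} (h : IsCFTails a y) (heq : y (m + p) = y m) :
    ∀ n, m ≤ n → a (n + p) = a n := by
  have htail (k : ℕ) : y (m + p + k) = y (m + k) := by
    induction k with
    | zero => exact heq
    | succ k ih =>
      show y (m + p + k + 1) = y (m + k + 1)
      rw [h.succ, h.succ, ← h.floor_inv (m + p + k), ih, h.floor_inv]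
  intro n hn
  obtain ⟨k, rfl⟩ := Nat.exists_eq_add_of_le hn
  rw [← h.floor_inv, ← h.floor_inv, Nat.add_right_comm, htail]

lemma exists_mobius (h : IsCFTails a y) (c j : ℕ) : ∃ α β γ δ : ℕ, 0 < δ ∧ (0 < j → 0 < γ) ∧
    y c * (γ * y (c + j) + δ) = α * y (c + j) + β := by
  induction j with
  | zero => exact ⟨1, 0, 0, 1, one_pos, by simp, by simp⟩
  | succ j ih =>
    obtain ⟨α, β, γ, δ, hδ, -, hmob⟩ := ih
    have hstep : y (c + j) * (a (c + j) + y (c + j + 1)) = 1 := by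
      rw [← h.inv_eq]
      exact mul_inv_cancel₀ (h.pos _).ne'
    refine ⟨β, α + a (c + j) * β, δ, γ + a (c + j) * δ,
      hδ.trans_le ((Nat.le_mul_of_pos_left δ (h.one_le _)).trans (Nat.le_add_left _ _)),
      fun _ => hδ, ?_⟩
    push_cast
    linear_combination (a (c + j) + y (c + j + 1)) * hmob - (y c * γ - α) * hstep

lemma quadIrrational_zero (h : IsCFTails a y) {n : ℕ} (hq : QuadIrrational (y n)) :
    QuadIrrational (y 0) := by
  induction n with
  | zero => exact hq
  | succ n ih => exact ih (h.eq_inv n ▸ (hq.natCast_add _).inv)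

theorem quadIrrational_of_periodic (h : IsCFTails a y) (h0 : Irrational (y 0)) {c p : ℕ}
    (hp : 0 < p) (hper : ∀ n, c ≤ n → a (n + p) = a n) : QuadIrrational (y 0) := by
  obtain ⟨α, β, γ, δ, -, hγ, hmob⟩ := h.exists_mobius c p
  rw [h.eq_of_periodic hper] at hmob
  refine h.quadIrrational_zero ⟨h.irrational h0 c, γ, δ - α, -β, by exact_mod_cast (hγ hp).ne', ?_⟩
  push_cast
  linear_combination hmob

end IsCFTails

structure IntQuadratic where
  A : ℤ
  B : ℤ
  C : ℤ

namespace IntQuadratic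

variable (q : IntQuadratic)

noncomputable def eval (t : ℝ) : ℝ := q.A * t ^ 2 + q.B * t + q.C

def disc : ℤ := q.B ^ 2 - 4 * q.A * q.C

/-- The quadratic whose roots are the `t⁻¹ - k` for the nonzero roots `t` of `q`. -/
def shift (k : ℤ) : IntQuadratic := ⟨q.C, q.B + 2 * k * q.C, q.A + k * q.B + k ^ 2 * q.C⟩

/-- The other root of `q` when `t` is a root (Vieta). -/
noncomputable def conj (t : ℝ) : ℝ := -q.B / q.A - t

def shifts (q : IntQuadratic) (a : ℕ → ℕ) : ℕ → IntQuadratic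
  | 0 => q
  | n + 1 => (shifts q a n).shift (a n)

variable {q} {y t : ℝ}

lemma disc_shift (k : ℤ) : (q.shift k).disc = q.disc := by
  simp only [disc, shift]
  ring

lemma disc_shifts (a : ℕ → ℕ) (n : ℕ) : (q.shifts a n).disc = q.disc := by
  induction n with
  | zero => rfl
  | succ n ih => rw [shifts, disc_shift, ih]

lemma eval_shift (k : ℤ) (ht : t ≠ 0) : (q.shift k).eval (t⁻¹ - k) = q.eval t / t ^ 2 := by
  simp only [eval, shift]
  field_simp
  push_cast
  ring

lemma eval_eq_mul (hA : q.A ≠ 0) (hy : q.eval y = 0) (t : ℝ) :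
    q.eval t = q.A * (t - y) * (t - q.conj y) := by
  have hA' : (q.A : ℝ) ≠ 0 := by exact_mod_cast hA
  simp only [eval, conj] at hy ⊢
  field_simp
  linear_combination hy

lemma eq_or_eq_conj (hA : q.A ≠ 0) (hy : q.eval y = 0) (ht : q.eval t = 0) :
    t = y ∨ t = q.conj y := by
  rw [eval_eq_mul hA hy, mul_assoc, mul_eq_zero, mul_eq_zero] at ht
  rcases ht with hA' | h | h
  · exact absurd (by exact_mod_cast hA') hA
  · exact Or.inl (sub_eq_zero.1 h)
  · exact Or.inr (sub_eq_zero.1 h)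

lemma sq_mul_sq_sub_conj (hA : q.A ≠ 0) (hy : q.eval y = 0) :
    (q.A : ℝ) ^ 2 * (y - q.conj y) ^ 2 = q.disc := by
  have hA' : (q.A : ℝ) ≠ 0 := by exact_mod_cast hA
  simp only [eval, conj, disc] at hy ⊢
  field_simp
  push_cast
  linear_combination 4 * (q.A : ℝ) * hy

lemma conj_ne (hA : q.A ≠ 0) (hy : Irrational y) : q.conj y ≠ y := by
  intro h
  refine hy ⟨-q.B / (2 * q.A), ?_⟩
  have hA' : (q.A : ℝ) ≠ 0 := by exact_mod_cast hA
  simp only [conj] at h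
  push_cast
  field_simp at h ⊢
  linarith

lemma conj_shift (hA : q.A ≠ 0) (hC : q.C ≠ 0) (hy0 : y ≠ 0) (hy : q.eval y = 0) (k : ℤ) :
    (q.shift k).conj (y⁻¹ - k) = (q.conj y)⁻¹ - k := by
  have hA' : (q.A : ℝ) ≠ 0 := by exact_mod_cast hA
  have hC' : (q.C : ℝ) ≠ 0 := by exact_mod_cast hC
  have hvieta : q.conj y * (-q.B / q.C - y⁻¹) = 1 := by
    simp only [eval, conj] at hy ⊢
    field_simp
    linear_combination (q.B : ℝ) * hy
  rw [inv_eq_of_mul_eq_one_right hvieta]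
  simp only [conj, shift]
  field_simp
  push_cast
  ring

lemma A_sq_lt_disc (hA : q.A ≠ 0) (hy : q.eval y = 0) (hsep : 1 < y - q.conj y) :
    q.A ^ 2 < q.disc := by
  have hA2 : (0 : ℝ) < (q.A : ℝ) ^ 2 := by positivity
  have : (q.A : ℝ) ^ 2 < q.disc := by
    rw [← sq_mul_sq_sub_conj hA hy]
    exact lt_mul_of_one_lt_right hA2 (by nlinarith)
  exact_mod_cast this

lemma finite_setOf_disc_eq (D : ℤ) :
    {q : IntQuadratic | q.disc = D ∧ q.A ^ 2 < D ∧ q.C ^ 2 < D}.Finite := by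
  let K := D + 4 * D ^ 2
  have hbox : ((fun q : IntQuadratic => (q.A, q.B, q.C)) ⁻¹'
      Icc (-K, -K, -K) (K, K, K)).Finite :=
    (finite_Icc _ _).preimage fun q _ r _ h => by cases q; cases r; simp_all
  refine hbox.subset fun q ⟨hdisc, hA, hC⟩ => ?_
  have sq_bound (t : ℤ) : |t| ≤ t ^ 2 := by
    rcases eq_or_ne t 0 with rfl | ht
    · simp
    · nlinarith [Int.one_le_abs ht, sq_abs t]
  have hAC : |q.A * q.C| ≤ D ^ 2 := by
    rw [abs_mul]
    nlinarith [sq_bound q.A, sq_bound q.C, abs_nonneg q.A, abs_nonneg q.C]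
  have hB : |q.B| ≤ K := by
    have : q.B ^ 2 = D + 4 * (q.A * q.C) := by rw [← hdisc, disc]; ring
    nlinarith [sq_bound q.B, le_abs_self (q.A * q.C)]
  have hA' := abs_le.1 ((sq_bound q.A).trans (by nlinarith : q.A ^ 2 ≤ K))
  have hB' := abs_le.1 hB
  have hC' := abs_le.1 ((sq_bound q.C).trans (by nlinarith : q.C ^ 2 ≤ K))
  exact ⟨⟨hA'.1, hB'.1, hC'.1⟩, ⟨hA'.2, hB'.2, hC'.2⟩⟩

end IntQuadratic

lemma lt_neg_one_of_recursion {a : ℕ → ℕ} (ha : ∀ n, 1 ≤ a n) {z : ℕ → ℝ}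
    (hrec : ∀ n, z (n + 1) = (z n)⁻¹ - a n) {N : ℕ} (hN : z N < 0) (k : ℕ) :
    z (N + 1 + k) < -1 := by
  have step (n : ℕ) (hn : z n < 0) : z (n + 1) < -1 := by
    have : (1 : ℝ) ≤ a n := by exact_mod_cast ha n
    rw [hrec]
    linarith [inv_lt_zero.2 hn]
  induction k with
  | zero => exact step N hN
  | succ k ih => exact step _ (ih.trans (by norm_num))

namespace IsCFTails

open IntQuadratic

variable {a : ℕ → ℕ} {y : ℕ → ℝ} {q : IntQuadratic}

lemma shifts_root (h : IsCFTails a y) (h0 : Irrational (y 0)) (hA : q.A ≠ 0)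
    (hq : q.eval (y 0) = 0) (n : ℕ) : (q.shifts a n).A ≠ 0 ∧ (q.shifts a n).eval (y n) = 0 := by
  induction n with
  | zero => exact ⟨hA, hq⟩
  | succ n ih =>
    obtain ⟨hAn, hroot⟩ := ih
    refine ⟨const_ne_zero_of_irrational_root (h.irrational h0 n) hAn hroot, ?_⟩
    have hshift := eval_shift (q := q.shifts a n) (a n) (h.pos n).ne'
    rw [Int.cast_natCast] at hshift
    rw [shifts, h.succ, hshift, hroot, zero_div]

lemma conj_shifts_succ (h : IsCFTails a y) (h0 : Irrational (y 0)) (hA : q.A ≠ 0)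
    (hq : q.eval (y 0) = 0) (n : ℕ) :
    (q.shifts a (n + 1)).conj (y (n + 1)) = ((q.shifts a n).conj (y n))⁻¹ - a n := by
  obtain ⟨hAn, hroot⟩ := h.shifts_root h0 hA hq n
  have hshift := conj_shift hAn (h.shifts_root h0 hA hq (n + 1)).1 (h.pos n).ne' hroot (a n)
  rw [Int.cast_natCast] at hshift
  rw [shifts, h.succ, hshift]

/-- Otherwise the conjugates would form a second positive solution of the recursion. -/
lemma exists_conj_shifts_neg (h : IsCFTails a y) (h0 : Irrational (y 0)) (hA : q.A ≠ 0)
    (hq : q.eval (y 0) = 0) : ∃ N, (q.shifts a N).conj (y N) < 0 := by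
  by_contra! hnonneg
  have hrec := h.conj_shifts_succ h0 hA hq
  have hpos (n : ℕ) : 0 < (q.shifts a n).conj (y n) := by
    refine (hnonneg n).lt_of_ne fun hz => ?_
    have : (1 : ℝ) ≤ a n := by exact_mod_cast h.one_le n
    linarith [hnonneg (n + 1), hrec n, inv_zero (G₀ := ℝ) ▸ congrArg (·⁻¹) hz.symm]
  exact conj_ne hA h0 (congrFun ((of_pos h.one_le hpos hrec).unique h) 0)

theorem exists_periodic_of_quadIrrational (h : IsCFTails a y) (hq : QuadIrrational (y 0)) :
    ∃ c p : ℕ, 0 < p ∧ ∀ n, c ≤ n → a (n + p) = a n := by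
  obtain ⟨h0, A, B, C, hA, hroot⟩ := hq
  let q : IntQuadratic := ⟨A, B, C⟩
  have hF := h.shifts_root (q := q) h0 hA hroot
  obtain ⟨N, hN⟩ := h.exists_conj_shifts_neg (q := q) h0 hA hroot
  have hz := lt_neg_one_of_recursion (z := fun n => (q.shifts a n).conj (y n)) h.one_le
    (h.conj_shifts_succ h0 hA hroot) hN
  have hsep (k : ℕ) : 1 < y (N + 1 + k) - (q.shifts a (N + 1 + k)).conj (y (N + 1 + k)) := by
    linarith [h.pos (N + 1 + k), hz k]
  have hbound (k : ℕ) : q.shifts a (N + 1 + k) ∈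
      {r : IntQuadratic | r.disc = q.disc ∧ r.A ^ 2 < q.disc ∧ r.C ^ 2 < q.disc} := by
    refine ⟨disc_shifts _ _, ?_, ?_⟩
    · exact disc_shifts a _ ▸ A_sq_lt_disc (hF _).1 (hF _).2 (hsep k)
    · exact disc_shifts a (N + 1 + k + 1) ▸ A_sq_lt_disc (hF _).1 (hF _).2 (hsep (k + 1))
  obtain ⟨m, m', hlt, heq⟩ :=
    (finite_setOf_disc_eq q.disc).exists_lt_map_eq_of_forall_mem hbound
  have hym : y (N + 1 + m') = y (N + 1 + m) := by
    have hroot' := (hF (N + 1 + m')).2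
    rw [← heq] at hroot'
    refine (eq_or_eq_conj (hF _).1 (hF _).2 hroot').resolve_right fun hconj => ?_
    linarith [h.pos (N + 1 + m'), hz m]
  refine ⟨N + 1 + m, m' - m, Nat.sub_pos_of_lt hlt, h.periodic_of_eq ?_⟩
  rwa [show N + 1 + m + (m' - m) = N + 1 + m' by omega]

end IsCFTails

theorem euler_lagrange_general (x : ℝ) (hirr : Irrational x)
    (a : ℕ → ℕ) (ha : ∀ n, 1 ≤ a n) (hcf : HasCF x a) :
    (∃ c p : ℕ, 0 < p ∧ ∀ n, c ≤ n → a (n + p) = a n) ↔ QuadIrrational x := by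
  have h := isCFTails_cfTails hirr ha hcf
  exact ⟨fun ⟨_, _, hp, hper⟩ => h.quadIrrational_of_periodic hirr hp hper,
    h.exists_periodic_of_quadIrrational⟩

/-- Euler–Lagrange: an irrational `x ∈ (0,1)` is a quadratic irrational if and only
if its continued fraction expansion is eventually periodic. -/
theorem euler_lagrange (x : ℝ) (hx0 : 0 < x) (hx1 : x < 1) (hirr : Irrational x)
    (a : ℕ → ℕ) (ha : ∀ n, 1 ≤ a n) (hcf : HasCF x a) :
    (∃ c p : ℕ, 0 < p ∧ ∀ n, c ≤ n → a (n + p) = a n) ↔ QuadIrrational x :=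
  euler_lagrange_general x hirr a ha hcf
end

section
/- Let w be a finite palindromic word over the positive integers beginning and ending in 2, of the form w = 2 b₂ b₃ … b_{l−1} 2. Let w' be the word obtained from w by replacing the final 2 with the two letters 1,1 (so w' = 2 b₂ … b_{l−1} 1 1). If the word w' followed by a 2 (i.e. w'2 = 2 b₂ … b_{l−1} 1 1 2) is a perfect power δ^k of a shorter word δ with k ≥ 2, then a contradiction arises; that is, w'2 is not a perfect power of a proper subword. -/
/-!
If `u = 2 mid 1 1 2` equals `δ ^ k` with `k ≥ 2`, then `δ` is a prefix and a suffix of `u`: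
it starts with `2` and, since `1` occurs in `u`, it is not `[2]`, so `δ = 2 x 1 1 2`.
In the palindrome `w = 2 mid 2` the prefix `2 x` is then followed by `1`, whereas the suffix
`x 2` of the same length is preceded by `2`, the first letter of the last copy of `δ`.
Mirror positions of a palindrome carry equal letters, so `1 = 2`.
-/

namespace List

variable {α : Type*}

theorem flatten_replicate_eq_append_append (l : List α) {k : ℕ} (hk : 2 ≤ k) :
    (replicate k l).flatten = l ++ (replicate (k - 2) l).flatten ++ l := by
  obtain ⟨j, rfl⟩ := Nat.exists_eq_add_of_le' hk
  rw [replicate_succ, replicate_succ']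
  simp

theorem eq_of_reverse_eq_of_prefix_of_suffix {p a s' : List α} {b c : α} (hp : p.reverse = p)
    (hpre : a ++ [b] <+: p) (hsuf : c :: s' <:+ p) (hlen : a.length = s'.length) :
    b = c := by
  obtain ⟨s, rfl⟩ := hpre
  obtain ⟨t, ht⟩ := hsuf
  have hrev : s'.reverse ++ c :: t.reverse = a ++ b :: s :=
    calc s'.reverse ++ c :: t.reverse = (t ++ c :: s').reverse := by simp
      _ = a ++ b :: s := by rw [ht, hp]; simp
  exact ((cons.inj (append_inj hrev (by simp [hlen])).2).1).symm

theorem eq_singleton_or_eq_cons_append_of_prefix_of_suffix {a b : α} (hab : a ≠ b)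
    {δ l l' : List α} (hne : δ ≠ []) (hpre : δ <+: a :: l) (hsuf : δ <:+ l' ++ [b, b, a]) :
    δ = [a] ∨ ∃ x, δ = a :: x ++ [b, b, a] := by
  have hhead : δ.head? = some a := by
    obtain ⟨t, ht⟩ := hpre
    cases δ with
    | nil => exact absurd rfl hne
    | cons c δ => simp_all
  rcases suffix_or_suffix_of_suffix hsuf (suffix_append l' [b, b, a]) with h | ⟨y, rfl⟩
  · rw [← mem_tails] at h
    simp only [tails, mem_cons, not_mem_nil, or_false] at h
    rcases h with rfl | rfl | rfl | rfl
    · exact absurd (Option.some.inj hhead).symm hab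
    · exact absurd (Option.some.inj hhead).symm hab
    · exact .inl rfl
    · exact absurd rfl hne
  · cases y with
    | nil => exact absurd (Option.some.inj hhead).symm hab
    | cons c x =>
      obtain rfl : c = a := Option.some.inj hhead
      exact .inr ⟨x, rfl⟩

end List

/-- Let `w = 2 b₂ … b_{l-1} 2` be a palindrome, and let `w'` be obtained from `w`
by replacing the final `2` by `1, 1`.  Then `w'` followed by a `2`, i.e.
`2 b₂ … b_{l-1} 1 1 2`, is not a perfect power of a shorter word. -/
theorem palindrome_not_power (mid : List ℕ)
    (hpal : (2 :: mid ++ [2] : List ℕ).reverse = 2 :: mid ++ [2]) :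
    ¬ ∃ (δ : List ℕ) (k : ℕ), 2 ≤ k ∧
      δ.length < (2 :: mid ++ [1, 1, 2] : List ℕ).length ∧
      (List.replicate k δ).flatten = 2 :: mid ++ [1, 1, 2] := by
  rintro ⟨δ, k, hk, -, hpow⟩
  have hne : δ ≠ [] := by rintro rfl; simp at hpow
  obtain ⟨z, hsplit⟩ : ∃ z, δ ++ z ++ δ = 2 :: mid ++ [1, 1, 2] :=
    ⟨_, by rw [← hpow, List.flatten_replicate_eq_append_append δ hk]⟩
  rcases List.eq_singleton_or_eq_cons_append_of_prefix_of_suffix (by decide : (2 : ℕ) ≠ 1) hne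
      (l := mid ++ [1, 1, 2]) ⟨z ++ δ, by simpa using hsplit⟩ ⟨δ ++ z, hsplit⟩
    with rfl | ⟨x, rfl⟩
  · have h1 : 1 ∈ (List.replicate k [2]).flatten := by rw [hpow]; simp
    simp at h1
  · have hmid : mid = x ++ [1, 1, 2] ++ z ++ 2 :: x := by
      apply (List.append_left_inj [1, 1, 2]).mp
      simpa using hsplit.symm
    have h12 : (1 : ℕ) = 2 := List.eq_of_reverse_eq_of_prefix_of_suffix hpal
      (a := 2 :: x) (s' := x ++ [2])
      ⟨[1, 2] ++ z ++ 2 :: x ++ [2], by simp [hmid]⟩ ⟨2 :: x ++ [1, 1, 2] ++ z, by simp [hmid]⟩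
      (by simp)
    exact absurd h12 (by decide)
end

section
/- Let x ∈ (0, 1/2) be an irrational number whose continued fraction expansion x = [0; a₁, a₂, …] begins, for infinitely many n, with a word of the form (w_n)^{m_n} u_n where m_n ≥ 2, w_n has length ℓ_n → ∞, w_n is not a perfect power of a shorter word, and u_n is an initial segment of w_n. Then the sequence (a_i) is not eventually periodic. -/
/-- The list `l` is an initial segment of the infinite word `a`. -/
def IsPrefixOfSeq (l : List ℕ) (a : ℕ → ℕ) : Prop :=
  ∀ i : ℕ, ∀ h : i < l.length, l.get ⟨i, h⟩ = a i

/-- A word is a perfect power of a shorter word. -/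
def IsPerfectPower (w : List ℕ) : Prop :=
  ∃ (δ : List ℕ) (k : ℕ), 2 ≤ k ∧ δ.length < w.length ∧ (List.replicate k δ).flatten = w

namespace List

variable {α : Type*}

theorem HasPeriod.flatten_replicate_take {w : List α} {g : ℕ} (per : w.HasPeriod g) :
    ∀ {k : ℕ}, w.length = k * g → (replicate k (w.take g)).flatten = w := by
  intro k
  induction k generalizing w with
  | zero => intro hlen; simp_all
  | succ k ih =>
    intro hlen
    rcases k.eq_zero_or_pos with rfl | hk
    · simp_all
    have hdrop : (w.drop g).length = k * g := by
      rw [length_drop, hlen, Nat.succ_mul, Nat.add_sub_cancel]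
    have hrest : (replicate k ((w.drop g).take g)).flatten = w.drop g :=
      ih (per.infix (drop_suffix g w).isInfix) hdrop
    have htake : (w.drop g).take g = w.take g := by
      have hg : g ≤ (w.drop g).length := hdrop ▸ Nat.le_mul_of_pos_left g hk
      rw [prefix_iff_eq_take.mp per.drop_prefix, take_take, min_eq_left hg]
    rw [replicate_succ, flatten_cons, ← htake, hrest, htake, take_append_drop]

theorem hasPeriod_flatten_replicate_append {w u : List α} (hu : u <+: w) (m : ℕ) :
    ((replicate m w).flatten ++ u).HasPeriod w.length := by
  cases m with
  | zero => exact hasPeriod_of_length_le _ _ (by simpa using hu.length_le)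
  | succ k =>
    have hshift : (replicate k w).flatten ++ u <+: (replicate (k + 1) w).flatten ++ u := by
      rw [replicate_succ', flatten_concat, append_assoc, prefix_append_right_inj]
      exact hu.trans (prefix_append w u)
    rw [HasPeriod, replicate_succ, flatten_cons, append_assoc, take_left]
    exact (prefix_append_right_inj w).mpr (by simpa [replicate_succ] using hshift)

end List

theorem IsPrefixOfSeq.hasPeriod_drop {l : List ℕ} {a : ℕ → ℕ} (hl : IsPrefixOfSeq l a)
    {c p : ℕ} (hper : ∀ i, c ≤ i → a (i + p) = a i) : (l.drop c).HasPeriod p := by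
  rw [List.hasPeriod_iff_getElem?]
  intro i hi
  rw [List.length_drop] at hi
  have h₁ := hl (c + i) (by omega)
  have h₂ := hl (c + i + p) (by omega)
  rw [List.get_eq_getElem] at h₁ h₂
  rw [List.getElem?_drop, List.getElem?_drop, ← add_assoc, List.getElem?_eq_getElem (by omega),
    List.getElem?_eq_getElem (by omega), h₁, h₂, hper _ (Nat.le_add_right c i)]

theorem isPerfectPower_of_hasPeriod {w : List ℕ} {g : ℕ} (per : w.HasPeriod g)
    (hlt : g < w.length) (hdvd : g ∣ w.length) : IsPerfectPower w := by
  obtain ⟨k, hk⟩ := hdvd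
  refine ⟨w.take g, k, ?_, by simpa using hlt, per.flatten_replicate_take (by rw [hk, mul_comm])⟩
  by_contra! hk2
  interval_cases k <;> simp_all

theorem repetitions_not_eventually_periodic_general (a : ℕ → ℕ)
    (hrep : ∀ N : ℕ, ∃ (w u : List ℕ) (m : ℕ),
      N ≤ w.length ∧ 2 ≤ m ∧ ¬ IsPerfectPower w ∧ u <+: w ∧
      IsPrefixOfSeq ((List.replicate m w).flatten ++ u) a) :
    ¬ ∃ c p : ℕ, 0 < p ∧ ∀ i, c ≤ i → a (i + p) = a i := by
  rintro ⟨c, p, hp, hper⟩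
  obtain ⟨w, u, m, hlen, hm, hprim, hu, hpre⟩ := hrep (c + p + 1)
  obtain ⟨k, rfl⟩ : ∃ k, m = k + 2 := ⟨m - 2, by omega⟩
  set W := (List.replicate (k + 2) w).flatten ++ u
  have hW : W = w ++ (w ++ ((List.replicate k w).flatten ++ u)) := by
    simp [W, List.replicate_succ]
  have per_p : (W.drop c).HasPeriod p := hpre.hasPeriod_drop hper
  have per_w : (W.drop c).HasPeriod w.length :=
    (List.hasPeriod_flatten_replicate_append hu _).infix (List.drop_suffix c W).isInfix
  have per_gcd := per_p.gcd per_w (by simp only [hW, List.length_drop, List.length_append]; omega)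
  have hinfix : w <:+: W.drop c :=
    ⟨w.drop c, _, by rw [hW, List.drop_append_of_le_length (by omega), List.append_assoc]⟩
  exact hprim (isPerfectPower_of_hasPeriod (per_gcd.infix hinfix)
    ((Nat.gcd_le_left _ hp).trans_lt (by omega)) (Nat.gcd_dvd_right _ _))

/-- If the continued fraction expansion of an irrational `x ∈ (0, 1/2)` begins, for
arbitrarily long primitive words `w`, with `w^m u` where `m ≥ 2` and `u` is an
initial segment of `w`, then the expansion is not eventually periodic. -/
theorem repetitions_not_eventually_periodic (x : ℝ)
    (hx0 : 0 < x) (hx1 : x < 1 / 2) (hirr : Irrational x)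
    (a : ℕ → ℕ) (ha : ∀ n, 1 ≤ a n) (hcf : HasCF x a)
    (hrep : ∀ N : ℕ, ∃ (w u : List ℕ) (m : ℕ),
      N ≤ w.length ∧ 2 ≤ m ∧ ¬ IsPerfectPower w ∧ u <+: w ∧
      IsPrefixOfSeq ((List.replicate m w).flatten ++ u) a) :
    ¬ ∃ c p : ℕ, 0 < p ∧ ∀ i, c ≤ i → a (i + p) = a i :=
  repetitions_not_eventually_periodic_general a hrep
end
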